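/- arXiv:math/0504487 — 8 statements merged into one kernel-verified Lean document; each statement's English description precedes it below -/
import Mathlib

section
/- Let a_1, …, a_n be distinct nonzero elements of a field K, let g(x) = ∏_{i=1}^n (x − a_i), and let u = a_1⋯a_n. For k ∈ ℕ, let r(x) be the unique polynomial of degree ≤ n − 1 with r(a_i) = a_i^{−k} for all i. Then r(x) = u^{−k} ∑_{l=0}^{n−1} (−x)^l S_{(k−1)^l, k^{n−1−l}}(a_1,…,a_n), where S_J(A) denotes the bialternant Schur polynomial in A = (a_1,…,a_n) indexed by the partition with n−1−l parts equal to k and l parts equal to k−1. -/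
open Polynomial Finset

private lemma schur_det_key {K : Type*} [Field K] {n : ℕ} (a : Fin n → K) (k : ℕ) (i : Fin n) :
    ∑ l : Fin n, (-1 : K) ^ (l : ℕ) * a i ^ ((k : ℤ) + l) *
      (Matrix.of fun s t : Fin n => a t ^
        (if (s : ℕ) = 0 then 0 else if (s : ℕ) ≤ (l : ℕ) then (k : ℤ) - 1 + s
          else (k : ℤ) + s)).det
    = (Matrix.of fun s t : Fin n => a t ^ ((k : ℤ) + s)).det := by
  set b : Fin (n + 1) → K := Fin.snoc a (a i) with hb
  set N : Matrix (Fin (n + 1)) (Fin (n + 1)) K :=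
    Matrix.of fun s t => if (s : ℕ) = 0 then 1 else b t ^ ((k : ℤ) + (s : ℕ) - 1) with hN
  have hdet : N.det = 0 := by
    refine Matrix.det_zero_of_column_eq (Fin.castSucc_lt_last i).ne fun s => ?_
    simp [hN, hb, Fin.snoc_castSucc, Fin.snoc_last]
  rw [Matrix.det_succ_column N (Fin.last n), Fin.sum_univ_succ] at hdet
  have h1 : N.submatrix (Fin.succAbove 0) (Fin.succAbove (Fin.last n))
      = Matrix.of fun s t : Fin n => a t ^ ((k : ℤ) + s) := by
    ext s t
    simp only [Matrix.submatrix_apply, Fin.succAbove_zero, Fin.succAbove_last, hN, hb,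
      Matrix.of_apply, Fin.val_succ, Fin.snoc_castSucc, Nat.succ_ne_zero, if_false]
    congr 1
    push_cast
    ring
  have h2 : ∀ l : Fin n, N.submatrix (Fin.succAbove (Fin.succ l)) (Fin.succAbove (Fin.last n))
      = Matrix.of fun s t : Fin n => a t ^
        (if (s : ℕ) = 0 then 0 else if (s : ℕ) ≤ (l : ℕ) then (k : ℤ) - 1 + s
          else (k : ℤ) + s) := by
    intro l
    ext s t
    simp only [Matrix.submatrix_apply, Fin.succAbove_last, Matrix.of_apply]
    by_cases hsl : (s : ℕ) ≤ (l : ℕ)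
    · have hlt : s.castSucc < Fin.succ l := by
        rw [Fin.castSucc_lt_succ_iff, Fin.le_def]; exact hsl
      rw [Fin.succAbove_of_castSucc_lt _ _ hlt]
      simp only [hN, Matrix.of_apply, Fin.coe_castSucc, hb, Fin.snoc_castSucc]
      by_cases hs0 : (s : ℕ) = 0
      · simp [hs0]
      · simp only [hs0, if_false, hsl, if_true]
        congr 1
        push_cast
        ring
    · have hlt : Fin.succ l ≤ s.castSucc := by
        rw [Fin.succ_le_castSucc_iff, Fin.lt_def]; omega
      rw [Fin.succAbove_of_le_castSucc _ _ hlt]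
      have hs0 : (s : ℕ) ≠ 0 := by omega
      simp only [hN, Matrix.of_apply, Fin.val_succ, Nat.succ_ne_zero, if_false, hb,
        Fin.snoc_castSucc, hs0, hsl]
      congr 1
      push_cast
      ring
  have h3 : N 0 (Fin.last n) = 1 := by simp [hN]
  have h4 : ∀ l : Fin n, N (Fin.succ l) (Fin.last n) = a i ^ ((k : ℤ) + l) := by
    intro l
    simp only [hN, Matrix.of_apply, Fin.val_succ, Nat.succ_ne_zero, if_false, hb, Fin.snoc_last]
    congr 1
    push_cast
    ring
  rw [h1, h3] at hdet
  have hrw : ∀ l : Fin n,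
      (-1 : K) ^ ((Fin.succ l : Fin (n + 1)) + (Fin.last n) : ℕ) * N (Fin.succ l) (Fin.last n) *
        (N.submatrix (Fin.succAbove (Fin.succ l)) (Fin.succAbove (Fin.last n))).det
      = (-1 : K) ^ ((l : ℕ) + 1 + n) * (a i ^ ((k : ℤ) + l)) *
        (Matrix.of fun s t : Fin n => a t ^
          (if (s : ℕ) = 0 then 0 else if (s : ℕ) ≤ (l : ℕ) then (k : ℤ) - 1 + s
            else (k : ℤ) + s)).det := by
    intro l
    rw [h2 l, h4 l, Fin.val_succ, Fin.val_last]
  rw [Finset.sum_congr rfl fun l _ => hrw l] at hdet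
  have hsum : ∑ l : Fin n, (-1 : K) ^ ((l : ℕ) + 1 + n) * (a i ^ ((k : ℤ) + l)) *
      (Matrix.of fun s t : Fin n => a t ^
        (if (s : ℕ) = 0 then 0 else if (s : ℕ) ≤ (l : ℕ) then (k : ℤ) - 1 + s
          else (k : ℤ) + s)).det
      = -((-1 : K) ^ n * ∑ l : Fin n, (-1 : K) ^ (l : ℕ) * a i ^ ((k : ℤ) + l) *
        (Matrix.of fun s t : Fin n => a t ^
          (if (s : ℕ) = 0 then 0 else if (s : ℕ) ≤ (l : ℕ) then (k : ℤ) - 1 + s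
            else (k : ℤ) + s)).det) := by
    rw [Finset.mul_sum, ← Finset.sum_neg_distrib]
    refine Finset.sum_congr rfl fun l _ => ?_
    ring
  rw [hsum] at hdet
  have h9 : (-1 : K) ^ n * (∑ l : Fin n, (-1 : K) ^ (l : ℕ) * a i ^ ((k : ℤ) + l) *
      (Matrix.of fun s t : Fin n => a t ^
        (if (s : ℕ) = 0 then 0 else if (s : ℕ) ≤ (l : ℕ) then (k : ℤ) - 1 + s
          else (k : ℤ) + s)).det)
      = (-1 : K) ^ n * (Matrix.of fun s t : Fin n => a t ^ ((k : ℤ) + s)).det := by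
    have h0n : ((0 : Fin (n + 1)) : ℕ) = 0 := rfl
    rw [h0n, Fin.val_last] at hdet
    linear_combination -hdet
  exact mul_left_cancel₀ (pow_ne_zero n (neg_ne_zero.2 one_ne_zero)) h9

/-- The interpolation data `r(aᵢ) = aᵢ⁻ᵏ`, `deg r ≤ n−1` determine `r` uniquely, and
the polynomial `∑_{l=0}^{n−1} (−x)^l S_{((k−1)^l, k^{n−1−l})}(A) · u^{−k}` (with the
Schur polynomials given by bialternants) satisfies these conditions. -/
theorem remainder_of_inverse_power {K : Type*} [Field K] {n : ℕ} (hn : 1 ≤ n)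
    (a : Fin n → K) (ha : Function.Injective a) (h0 : ∀ i, a i ≠ 0) (k : ℕ)
    (u : K) (hu : u = ∏ i, a i)
    -- bialternant Schur polynomial of the shape `(0, (k−1)^l, k^{n−1−l})`
    -- (the shape `((k−1)^l, k^{n−1−l})` of length `n−1`, padded to length `n`):
    (S : ℕ → K)
    (hS : ∀ l : ℕ, S l =
      (Matrix.of fun s t : Fin n => a t ^
        (if (s : ℕ) = 0 then 0 else if (s : ℕ) ≤ l then (k : ℤ) - 1 + s
          else (k : ℤ) + s)).det /
      (Matrix.of fun s t : Fin n => a t ^ (s : ℕ)).det)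
    (P : K[X])
    (hP : P = ∑ l ∈ Finset.range n, C (u ^ (-(k : ℤ)) * (-1) ^ l * S l) * X ^ l) :
    (P.degree < n ∧ ∀ i, P.eval (a i) = a i ^ (-(k : ℤ))) ∧
      ∀ r : K[X], r.degree < n → (∀ i, r.eval (a i) = a i ^ (-(k : ℤ))) → r = P := by
  have hV : (Matrix.of fun s t : Fin n => a t ^ (s : ℕ)).det ≠ 0 := by
    have hVe : (Matrix.of fun s t : Fin n => a t ^ (s : ℕ)).det = (Matrix.vandermonde a).det := by
      rw [← Matrix.det_transpose (Matrix.vandermonde a)]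
      rfl
    rw [hVe]
    exact Matrix.det_vandermonde_ne_zero_iff.2 ha
  have hu0 : u ≠ 0 := by
    rw [hu]
    exact Finset.prod_ne_zero_iff.2 fun i _ => h0 i
  set V := (Matrix.of fun s t : Fin n => a t ^ (s : ℕ)).det with hVdef
  set D : ℕ → K := fun l => (Matrix.of fun s t : Fin n => a t ^
      (if (s : ℕ) = 0 then 0 else if (s : ℕ) ≤ l then (k : ℤ) - 1 + s
        else (k : ℤ) + s)).det with hD
  -- the big determinant equals `u^k * V`
  have hW : (Matrix.of fun s t : Fin n => a t ^ ((k : ℤ) + s)).det = u ^ k * V := by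
    have : (Matrix.of fun s t : Fin n => a t ^ ((k : ℤ) + s))
        = Matrix.of fun s t : Fin n => (a t ^ k) * (a t ^ (s : ℕ)) := by
      ext s t
      rw [Matrix.of_apply, Matrix.of_apply, zpow_add₀ (h0 t), zpow_natCast, zpow_natCast]
    rw [this, Matrix.det_mul_row (fun t => a t ^ k) ((fun s t : Fin n => a t ^ (s : ℕ)) : Matrix (Fin n) (Fin n) K), hu, Finset.prod_pow]
    rfl
  have heval : ∀ i, P.eval (a i) = a i ^ (-(k : ℤ)) := by
    intro i
    have hkey := schur_det_key a k i
    have hTsum : a i ^ k * (∑ l : Fin n, (-1 : K) ^ (l : ℕ) * a i ^ (l : ℕ) * D l)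
        = u ^ k * V := by
      rw [Finset.mul_sum, ← hW, ← hkey]
      refine Finset.sum_congr rfl fun l _ => ?_
      simp only [hD]
      rw [zpow_add₀ (h0 i), zpow_natCast, zpow_natCast]
      ring
    have hai : a i ^ k ≠ 0 := pow_ne_zero _ (h0 i)
    rw [hP]
    rw [eval_finset_sum]
    simp only [eval_mul, eval_C, eval_pow, eval_X]
    rw [← Fin.sum_univ_eq_sum_range
      (fun l => u ^ (-(k : ℤ)) * (-1 : K) ^ l * S l * a i ^ l) n]
    have hterm : ∀ l : Fin n,
        u ^ (-(k : ℤ)) * (-1 : K) ^ (l : ℕ) * S (l : ℕ) * a i ^ (l : ℕ)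
        = (u ^ k)⁻¹ * V⁻¹ * ((-1 : K) ^ (l : ℕ) * a i ^ (l : ℕ) * D (l : ℕ)) := by
      intro l
      rw [hS, zpow_neg, zpow_natCast, div_eq_mul_inv]
      rw [hD]
      ring
    rw [Finset.sum_congr rfl fun l _ => hterm l, ← Finset.mul_sum]
    rw [zpow_neg, zpow_natCast]
    field_simp
    linear_combination hTsum
  have hdeg : P.degree < n := by
    rw [hP]
    refine lt_of_le_of_lt (Polynomial.degree_sum_le _ _) ?_
    rw [Finset.sup_lt_iff (by exact_mod_cast WithBot.bot_lt_coe n)]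
    intro l hl
    refine lt_of_le_of_lt (Polynomial.degree_C_mul_X_pow_le l _) ?_
    exact_mod_cast Finset.mem_range.1 hl
  refine ⟨⟨hdeg, heval⟩, fun r hrdeg hreval => ?_⟩
  refine Polynomial.eq_of_degrees_lt_of_eval_index_eq (v := a) Finset.univ
    ha.injOn ?_ ?_ fun i _ => ?_
  · simpa using hrdeg
  · simpa using hdeg
  · rw [hreval i, heval i]
end

section
/- Let a_1, …, a_n be distinct elements of a field and k ∈ ℕ with k ≥ n. The remainder of x^k upon division by g(x) = ∏_{i=1}^n (x − a_i) equals ∑_{l=1}^{n} S_{(k−l+1, 0^{n−l})}(a_1,…,a_n) · x^{l−1}, where S_{(k−l+1,0^{n−l})}(A) denotes the bialternant Schur polynomial with index vector having k−l+1 in position l (i.e., the ratio det(a_t^{c_s + s − 1})/det(a_t^{s−1}) where c = (0,…,0,k−l+1,0,…,0) with the nonzero entry in position l). -/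
open Polynomial Finset Matrix

/-!
The remainder `r` of `x^k` modulo `g` is the polynomial of degree `< n` with `r(aᵢ) = aᵢ^k`;
its coefficient vector therefore solves the Vandermonde system `V c = (aᵢ^k)ᵢ`. By Cramer's rule
the `l`-th coefficient is `det V_l / det V`, where `V_l` is `Vᵀ` with its `l`-th row replaced by
`(a_t^k)_t`, and this is exactly the bialternant with exponent `k` in row `l`.
-/

namespace Lagrange

variable {F ι : Type*} [Field F] {s : Finset ι} {v : ι → F}

theorem modByMonic_nodal_eq_of_eval_eq (hvs : Set.InjOn v s) {p r : F[X]} (hr : r.degree < #s)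
    (h : ∀ i ∈ s, r.eval (v i) = p.eval (v i)) : p %ₘ nodal s v = r := by
  refine eq_of_degrees_lt_of_eval_index_eq s hvs ?_ hr fun i hi => ?_
  · simpa only [degree_nodal] using degree_modByMonic_lt p (nodal_monic (s := s) (v := v))
  · rw [h i hi]
    exact eval₂_modByMonic_eq_self_of_root (eval_nodal_at_node hi)

end Lagrange

theorem Matrix.sum_det_updateRow_transpose_vandermonde_mul_pow {R : Type*} [CommRing R] {n : ℕ}
    (a b : Fin n → R) (t : Fin n) :
    ∑ l, (updateRow (vandermonde a)ᵀ l b).det * a t ^ (l : ℕ) = (vandermonde a).det * b t := by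
  have := congrFun (mulVec_cramer (vandermonde a) b) t
  simp only [← cramer_transpose_apply, transpose_transpose]
  simpa [mulVec, dotProduct, vandermonde, mul_comm] using this

theorem Polynomial.modByMonic_prod_X_sub_C_eq_sum_det {K : Type*} [Field K] {n : ℕ}
    {a : Fin n → K} (ha : Function.Injective a) (p : K[X]) :
    p %ₘ ∏ i, (X - C (a i)) =
      ∑ l : Fin n, C ((updateRow (vandermonde a)ᵀ l fun t => p.eval (a t)).det /
        (vandermonde a).det) * X ^ (l : ℕ) := by
  have hdet : (vandermonde a).det ≠ 0 := det_vandermonde_ne_zero_iff.mpr ha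
  refine Lagrange.modByMonic_nodal_eq_of_eval_eq ha.injOn
    (by simpa using degree_sum_fin_lt _) fun t _ => ?_
  simp only [eval_finsetSum, eval_mul, eval_C, eval_pow, eval_X, div_mul_eq_mul_div,
    ← Finset.sum_div, sum_det_updateRow_transpose_vandermonde_mul_pow]
  exact mul_div_cancel_left₀ _ hdet

theorem remainder_power_eq_schur_sum_general {K : Type*} [Field K] {n : ℕ}
    (a : Fin n → K) (ha : Function.Injective a)
    (k : ℕ) (g : K[X]) (hg : g = ∏ i, (X - C (a i))) :
    (X ^ k) %ₘ g =
      ∑ l : Fin n,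
        C ((Matrix.of fun s t : Fin n =>
              a t ^ (if s = l then k else (s : ℕ))).det /
            (Matrix.of fun s t : Fin n => a t ^ (s : ℕ)).det) * X ^ (l : ℕ) := by
  have hrow (l : Fin n) : (Matrix.of fun s t : Fin n => a t ^ (if s = l then k else (s : ℕ))) =
      updateRow (vandermonde a)ᵀ l fun t => a t ^ k := by
    ext s t
    by_cases h : s = l <;> simp [updateRow_apply, h, vandermonde]
  have hV : (Matrix.of fun s t : Fin n => a t ^ (s : ℕ)) = (vandermonde a)ᵀ := rfl
  simp only [hg, hrow, hV, det_transpose, modByMonic_prod_X_sub_C_eq_sum_det ha, eval_pow, eval_X]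

/-- The remainder of `x^k` modulo `∏ (x − aᵢ)` is
`∑_{l=1}^{n} S_{(0^{l−1}, k−l+1, 0^{n−l})}(A) · x^{l−1}`. -/
theorem remainder_power_eq_schur_sum {K : Type*} [Field K] {n : ℕ}
    (a : Fin n → K) (ha : Function.Injective a)
    (k : ℕ) (hk : n ≤ k) (g : K[X]) (hg : g = ∏ i, (X - C (a i))) :
    (X ^ k) %ₘ g =
      ∑ l : Fin n,
        C ((Matrix.of fun s t : Fin n =>
              a t ^ (if s = l then k else (s : ℕ))).det /
            (Matrix.of fun s t : Fin n => a t ^ (s : ℕ)).det) * X ^ (l : ℕ) :=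
  remainder_power_eq_schur_sum_general a ha k g hg
end

section
/- Let a_1,…,a_n be distinct nonzero elements of a field. Define the double companion matrix C = (c_{l−1,k})_{1≤l≤n, k∈ℤ}, where for each k ∈ ℤ, ∑_{l=1}^n c_{l−1,k} x^{l−1} is the unique polynomial of degree < n taking value a_i^k at each a_i. Then c_{l−1,k} = 𝔊_{(0^{l−1}, k−l+1, 0^{n−l})}(A) for all l and all k ∈ ℤ. -/
/-!
The coefficient vector of `r` solves the Vandermonde system `V c = (aᵢᵏ)ᵢ`, so by Cramer's rule
`c_l = det (V with column l replaced by (aᵢᵏ)) / det V`. Transposed, the replaced column is the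
row of exponent `k` in place of `l`, i.e. the numerator of `𝔊` for the exponent vector with
`k - l` in position `l`.
-/

open Polynomial Finset

/-- The generalized bialternant `𝔊_c(A) = det(aₜ^{c_s+s−1}) / det(aₜ^{s−1})`. -/
noncomputable def genSchur {K : Type*} [Field K] {n : ℕ} (x : Fin n → K)
    (c : Fin n → ℤ) : K :=
  (Matrix.of fun s t : Fin n => x t ^ (c s + (s : ℤ))).det /
    (Matrix.of fun s t : Fin n => x t ^ ((s : ℕ) : ℤ)).det

open Matrix

theorem Matrix.cramer_mulVec {n R : Type*} [Fintype n] [DecidableEq n] [CommRing R]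
    (A : Matrix n n R) (c : n → R) : A.cramer (A *ᵥ c) = A.det • c := by
  rw [cramer_eq_adjugate_mulVec, mulVec_mulVec, adjugate_mul, smul_mulVec, one_mulVec]

theorem Matrix.eq_cramer_div_det {n K : Type*} [Fintype n] [DecidableEq n] [Field K]
    {A : Matrix n n K} (hA : A.det ≠ 0) {b c : n → K} (h : A *ᵥ c = b) (i : n) :
    c i = A.cramer b i / A.det := by
  rw [← h, cramer_mulVec, Pi.smul_apply, smul_eq_mul, mul_div_cancel_left₀ _ hA]

theorem Polynomial.vandermonde_mulVec_coeff {R : Type*} [CommRing R] {n : ℕ} (v : Fin n → R)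
    {p : R[X]} (hp : p.degree < n) :
    vandermonde v *ᵥ (fun j : Fin n => p.coeff j) = fun i => p.eval (v i) := by
  funext i
  simp only [mulVec, dotProduct, vandermonde_apply, eval_eq_sum]
  rw [← sum_fin (fun e a => a * v i ^ e) (fun _ => zero_mul _) hp]
  exact Finset.sum_congr rfl fun _ _ => mul_comm _ _

theorem genSchur_ite_eq_det_updateRow_div {K : Type*} [Field K] {n : ℕ} (a : Fin n → K)
    (k : ℤ) (l : Fin n) :
    genSchur a (fun s => if s = l then k - (l : ℤ) else 0) =
      ((vandermonde a)ᵀ.updateRow l fun t => a t ^ k).det / (vandermonde a).det := by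
  rw [genSchur, ← det_transpose (vandermonde a)]
  congr 2 <;> ext s t
  · by_cases hs : s = l
    · simp [hs]
    · simp [hs, vandermonde_apply]
  · simp [vandermonde_apply]

theorem double_companion_entries_general {K : Type*} [Field K] {n : ℕ}
    (a : Fin n → K) (ha : Function.Injective a) (k : ℤ)
    (r : K[X]) (hdeg : r.degree < n) (hval : ∀ i, r.eval (a i) = a i ^ k) :
    ∀ l : Fin n, r.coeff l =
      genSchur a (fun s => if s = l then k - (l : ℤ) else 0) := by
  intro l
  have hV : (vandermonde a).det ≠ 0 := det_vandermonde_ne_zero_iff.2 ha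
  have hinterp : vandermonde a *ᵥ (fun j : Fin n => r.coeff j) = fun i => a i ^ k := by
    rw [vandermonde_mulVec_coeff a hdeg]
    exact funext hval
  rw [genSchur_ite_eq_det_updateRow_div, ← cramer_transpose_apply, transpose_transpose]
  exact eq_cramer_div_det hV hinterp l

/-- The entries of the double companion matrix: the coefficient of `x^{l−1}` in
the degree `< n` polynomial taking value `aᵢᵏ` at each `aᵢ` is
`𝔊_{(0^{l−1}, k−l+1, 0^{n−l})}(A)`, for every `k ∈ ℤ`. -/
theorem double_companion_entries {K : Type*} [Field K] {n : ℕ}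
    (a : Fin n → K) (ha : Function.Injective a) (h0 : ∀ i, a i ≠ 0) (k : ℤ)
    (r : K[X]) (hdeg : r.degree < n) (hval : ∀ i, r.eval (a i) = a i ^ k) :
    ∀ l : Fin n, r.coeff l =
      genSchur a (fun s => if s = l then k - (l : ℤ) else 0) :=
  double_companion_entries_general a ha k r hdeg hval
end

section
/- With notation as in the double companion matrix, for any m ∈ ℤ, the m-th power of the n×n companion matrix C_{1^n}(A) (the submatrix of C(A) on columns 1, 2, …, n, i.e., with (l,p) entry the coefficient of x^{l−1} in the degree-<n polynomial taking value a_i^{p} at each a_i) equals C_{m^n}(A), the submatrix of C(A) on columns m, m+1, …, m+n−1. -/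
open Polynomial Finset

/-- The submatrix `C_I(A)` of the double companion matrix on columns
`i₁ + 0, i₂ + 1, …, i_n + n − 1`: its `p`-th column is the coefficient vector of
the unique degree `< n` polynomial taking value `aᵢ^{i_p + p − 1}` at each `aᵢ`. -/
noncomputable def companionSub {K : Type*} [Field K] {n : ℕ} [DecidableEq K]
    (a : Fin n → K) (I : Fin n → ℤ) : Matrix (Fin n) (Fin n) K :=
  Matrix.of fun l p =>
    (Lagrange.interpolate Finset.univ a (fun i => a i ^ (I p + (p : ℤ)))).coeff l

/-!
The Vandermonde matrix `V = (aᵢ^l)` sends the coefficient vector of a polynomial of degree `< n`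
to its vector of values at the nodes, so `V * C_I(A) = (aᵢ^{i_p + p})`. For a constant index
`I = mⁿ` this reads `V * C_{mⁿ}(A) = D^m * V` with `D = diag(a)`, i.e. `C_{mⁿ}(A) = V⁻¹ D^m V`.
Since `V` and `D` are invertible, `m ↦ V⁻¹ D^m V` is multiplicative on `ℤ`, which gives the claim.
-/

namespace Matrix

theorem vandermonde_mul_of_coeff {R : Type*} [CommRing R] {n : ℕ} (v : Fin n → R)
    (p : Fin n → R[X]) (hp : ∀ j, (p j).degree < n) :
    vandermonde v * of (fun (i j : Fin n) => (p j).coeff i) = of fun i j => (p j).eval (v i) := by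
  ext i j
  have hdeg : (p j).natDegree < n := by
    by_cases h : p j = 0
    · simpa [h] using j.pos
    · exact (natDegree_lt_iff_degree_lt h).mpr (hp j)
  rw [mul_apply, of_apply, eval_eq_sum_range' hdeg, ← Fin.sum_univ_eq_sum_range]
  simp only [vandermonde_apply, of_apply, mul_comm]

theorem diagonal_zpow {K : Type*} [Field K] {ι : Type*} [Fintype ι] [DecidableEq ι]
    (v : ι → K) (hv : ∀ i, v i ≠ 0) (m : ℤ) : diagonal v ^ m = diagonal (v ^ m) := by
  cases m with
  | ofNat k => simp [diagonal_pow]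
  | negSucc k =>
    rw [_root_.zpow_negSucc, diagonal_pow]
    refine inv_eq_left_inv ?_
    rw [diagonal_mul_diagonal, ← diagonal_one]
    congr 1
    ext i
    simp [_root_.zpow_negSucc, hv i]

theorem conj_zpow {R : Type*} [CommRing R] {ι : Type*} [Fintype ι] [DecidableEq ι]
    {P A : Matrix ι ι R} (hP : IsUnit P.det) (hA : IsUnit A.det) (m : ℤ) :
    (P⁻¹ * A * P) ^ m = P⁻¹ * A ^ m * P := by
  have hconj : SemiconjBy P (P⁻¹ * A * P) A := by
    rw [SemiconjBy, ← mul_assoc, ← mul_assoc, mul_nonsing_inv _ hP, one_mul]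
  have hconj_det : IsUnit (P⁻¹ * A * P).det := by
    rw [det_mul, det_mul]
    exact ((isUnit_nonsing_inv_det _ hP).mul hA).mul hP
  rw [mul_assoc (P⁻¹) (A ^ m), ← (Matrix.SemiconjBy.zpow_right hconj_det hA hconj m).eq,
    nonsing_inv_mul_cancel_left _ _ hP]

end Matrix

section Companion

variable {K : Type*} [Field K] [DecidableEq K] {n : ℕ} {a : Fin n → K}

theorem vandermonde_mul_companionSub (ha : Function.Injective a) (I : Fin n → ℤ) :
    Matrix.vandermonde a * companionSub a I = Matrix.of fun i p => a i ^ (I p + (p : ℤ)) := by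
  rw [companionSub, Matrix.vandermonde_mul_of_coeff]
  · ext i p
    exact Lagrange.eval_interpolate_at_node _ ha.injOn (mem_univ i)
  · intro p
    simpa using Lagrange.degree_interpolate_lt (s := univ) (r := fun i => a i ^ (I p + (p : ℤ)))
      ha.injOn

theorem companionSub_const_eq_conj (ha : Function.Injective a) (h0 : ∀ i, a i ≠ 0) (m : ℤ) :
    companionSub a (fun _ => m) =
      (Matrix.vandermonde a)⁻¹ * Matrix.diagonal a ^ m * Matrix.vandermonde a := by
  have hV : IsUnit (Matrix.vandermonde a).det :=
    (Matrix.det_vandermonde_ne_zero_iff.mpr ha).isUnit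
  have hintertwine :
      Matrix.vandermonde a * companionSub a (fun _ => m) =
        Matrix.diagonal a ^ m * Matrix.vandermonde a := by
    rw [vandermonde_mul_companionSub ha, Matrix.diagonal_zpow a h0]
    ext i p
    simp [Matrix.diagonal_mul, zpow_add₀ (h0 i)]
  rw [mul_assoc, ← hintertwine, Matrix.nonsing_inv_mul_cancel_left _ _ hV]

end Companion

/-- `(C_{1ⁿ}(A))^m = C_{mⁿ}(A)` for every `m ∈ ℤ`. -/
theorem companion_zpow {K : Type*} [Field K] [DecidableEq K] {n : ℕ}
    (a : Fin n → K) (ha : Function.Injective a) (h0 : ∀ i, a i ≠ 0) (m : ℤ) :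
    (companionSub a fun _ => (1 : ℤ)) ^ m = companionSub a fun _ => m := by
  have hV : IsUnit (Matrix.vandermonde a).det :=
    (Matrix.det_vandermonde_ne_zero_iff.mpr ha).isUnit
  have hD : IsUnit (Matrix.diagonal a).det := by
    rw [Matrix.det_diagonal]
    exact (prod_ne_zero_iff.mpr fun i _ => h0 i).isUnit
  rw [companionSub_const_eq_conj ha h0, companionSub_const_eq_conj ha h0, zpow_one,
    Matrix.conj_zpow hV hD]
end

section
/- (Generalized Giambelli identity) Let a_1,…,a_n be distinct nonzero elements of a field and let J = (j_1,…,j_n) ∈ ℤ^n be arbitrary. Then 𝔊_J(A) = det( 𝔊_{(0^{l−1}, j_k + k − l, 0^{n−l})}(A) )_{1≤l,k≤n}. -/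
namespace Matrix

variable {K ι : Type*} [Field K] [Fintype ι] [DecidableEq ι]

theorem det_updateRow_div_det (M : Matrix ι ι K) (i : ι) (v : ι → K) :
    (M.updateRow i v).det / M.det = ((Mᵀ)⁻¹ *ᵥ v) i := by
  rw [← cramer_transpose_apply, cramer_eq_adjugate_mulVec, inv_def, smul_mulVec,
    Pi.smul_apply, smul_eq_mul, det_transpose, Ring.inverse_eq_inv', div_eq_inv_mul]

theorem det_of_det_updateRow_div_det (M N : Matrix ι ι K) :
    (of fun i j => (M.updateRow i (N j)).det / M.det).det = N.det / M.det := by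
  have h : (of fun i j => (M.updateRow i (N j)).det / M.det) = (Mᵀ)⁻¹ * Nᵀ := by
    ext i j
    rw [of_apply, det_updateRow_div_det, mulVec, mul_apply, dotProduct]
    rfl
  rw [h, det_mul, det_nonsing_inv, det_transpose, det_transpose, Ring.inverse_eq_inv',
    div_eq_inv_mul]

end Matrix

theorem genSchur_single {K : Type*} [Field K] {n : ℕ} (a : Fin n → K) (l : Fin n) (m : ℤ) :
    genSchur a (fun s => if s = l then m - (l : ℤ) else 0) =
      ((Matrix.of fun s t : Fin n => a t ^ ((s : ℕ) : ℤ)).updateRow l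
        (fun t => a t ^ m)).det / (Matrix.of fun s t : Fin n => a t ^ ((s : ℕ) : ℤ)).det := by
  rw [genSchur]
  congr 2
  ext s t
  by_cases h : s = l
  · subst h
    simp
  · simp [h]

theorem generalized_giambelli_general {K : Type*} [Field K] {n : ℕ}
    (a : Fin n → K)
    (J : Fin n → ℤ) :
    genSchur a J =
      (Matrix.of fun l k : Fin n =>
        genSchur a (fun s => if s = l then J k + (k : ℤ) - (l : ℤ) else 0)).det := by
  simp only [genSchur_single]
  rw [genSchur]
  exact (Matrix.det_of_det_updateRow_div_det _ (Matrix.of fun k t => a t ^ (J k + (k : ℤ)))).symm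

/-- Generalized Giambelli identity:
`𝔊_J(A) = det( 𝔊_{(0^{l−1}, j_k + k − l, 0^{n−l})}(A) )_{l,k}` for any `J ∈ ℤⁿ`. -/
theorem generalized_giambelli {K : Type*} [Field K] {n : ℕ}
    (a : Fin n → K) (ha : Function.Injective a) (h0 : ∀ i, a i ≠ 0)
    (J : Fin n → ℤ) :
    genSchur a J =
      (Matrix.of fun l k : Fin n =>
        genSchur a (fun s => if s = l then J k + (k : ℤ) - (l : ℤ) else 0)).det :=
  generalized_giambelli_general a J
end

section
/- Let a_1,…,a_n be distinct roots of a monic polynomial g of degree n over a field, all nonzero, and let T^{(1)}, …, T^{(n)} be doubly infinite sequences (T^{(i)}_m)_{m∈ℤ} each satisfying the linear recurrence with characteristic polynomial g (i.e., if g(x) = x^n − ∑_{s=0}^{n−1} e_s x^s then T^{(i)}_{m+n} = ∑_{s=0}^{n−1} e_s T^{(i)}_{m+s} for all m ∈ ℤ). Assume det(T^{(k)}_{l−1})_{1≤k,l≤n} ≠ 0. Then for any J = (j_1,…,j_n) ∈ ℤ^n, 𝔊_J(A) = det(T^{(k)}_{j_l + l − 1})_{1≤k,l≤n} / det(T^{(k)}_{l−1})_{1≤k,l≤n}.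 -/
/-!
Every doubly infinite solution of the recurrence is a combination `m ↦ ∑ⱼ cⱼ aⱼ ^ m` of the
geometric solutions: the coefficients are found by matching the window `0, …, n - 1` through the
invertible Vandermonde matrix of the `aⱼ`, and a solution vanishing on a window vanishes
everywhere because `0` is not a root of `g` (so the recurrence can also be run backwards).
Hence `(T k (f l))ₖₗ = C * (aⱼ ^ f l)ⱼₗ` for every `f : Fin n → ℤ`, and `det C` cancels.
-/

open Polynomial Finset

open Matrix

namespace LinearRecurrence

section CommRing

variable {R : Type*} [CommRing R] (E : LinearRecurrence R)

def intSolSpace : Submodule R (ℤ → R) where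
  carrier := {u | ∀ m : ℤ, u (m + E.order) = ∑ i, E.coeffs i * u (m + i)}
  zero_mem' := by simp
  add_mem' {u v} hu hv m := by simp [hu m, hv m, mul_add, sum_add_distrib]
  smul_mem' c u hu m := by simp [hu m, mul_sum, mul_left_comm]

variable {E}

theorem coeffs_zero_ne_zero {k : ℕ} {e : Fin (k + 1) → R}
    (h0 : ¬(LinearRecurrence.mk (k + 1) e).charPoly.IsRoot 0) : e 0 ≠ 0 := by
  simpa [charPoly, eval_finsetSum, Fin.sum_univ_succ] using h0

theorem eq_zero_of_mem_intSolSpace [NoZeroDivisors R] (h0 : ¬E.charPoly.IsRoot 0) {u : ℤ → R}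
    (hu : u ∈ E.intSolSpace) (hwin : ∀ l : Fin E.order, u l = 0) : u = 0 := by
  obtain ⟨_ | k, e⟩ := E
  · funext m
    simpa using hu m
  have he0 := coeffs_zero_ne_zero h0
  have hu : ∀ m : ℤ, u (m + (k + 1)) = ∑ i, e i * u (m + i) := mod_cast hu
  let Window (m : ℤ) : Prop := ∀ l : Fin (k + 1), u (m + l) = 0
  have up (m : ℤ) (h : Window m) : Window (m + 1) := by
    intro l
    induction l using Fin.lastCases with
    | last =>
      rw [Fin.val_last, show m + 1 + k = m + (k + 1) by ring, hu m]
      exact sum_eq_zero fun i _ => by rw [h i, mul_zero]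
    | cast i => simpa [add_assoc, add_comm (1 : ℤ)] using h i.succ
  have down (m : ℤ) (h : Window (m + 1)) : Window m := by
    intro l
    induction l using Fin.cases with
    | zero =>
      have hlast : u (m + (k + 1)) = 0 := by
        simpa [add_assoc, add_comm (1 : ℤ)] using h (Fin.last k)
      have hrest (i : Fin k) : e i.succ * u (m + (i.succ : ℕ)) = 0 := by
        have hi : m + ((i.succ : ℕ) : ℤ) = m + 1 + (i.castSucc : ℕ) := by
          rw [Fin.val_succ, Fin.val_castSucc]; push_cast; ring
        rw [hi, h, mul_zero]
      rw [hu m, Fin.sum_univ_succ, Fintype.sum_eq_zero _ hrest, add_zero] at hlast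
      simpa [he0] using hlast
    | succ i => simpa [add_assoc, add_comm (1 : ℤ)] using h i.castSucc
  have hall (m : ℤ) : Window m := by
    induction m using Int.induction_on with
    | zero => intro l; simpa using hwin l
    | succ m ih => exact up m ih
    | pred m ih => exact down _ (by simpa using ih)
  funext m
  simpa using hall m 0

end CommRing

section Field

variable {K : Type*} [Field K] {E : LinearRecurrence K}

theorem zpow_mem_intSolSpace {q : K} (hq : E.charPoly.IsRoot q) (hq0 : q ≠ 0) :
    (fun m : ℤ => q ^ m) ∈ E.intSolSpace := by
  intro m
  have hpow := (E.geom_sol_iff_root_charPoly q).2 hq 0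
  simp only [zero_add] at hpow
  simp only [zpow_add₀ hq0, zpow_natCast, hpow, mul_sum]
  exact sum_congr rfl fun _ _ => by ring

theorem exists_eq_sum_zpow_of_mem_intSolSpace (h0 : ¬E.charPoly.IsRoot 0)
    {x : Fin E.order → K} (hx : Function.Injective x) (hroot : ∀ j, E.charPoly.IsRoot (x j))
    {u : ℤ → K} (hu : u ∈ E.intSolSpace) :
    ∃ c : Fin E.order → K, ∀ m, u m = ∑ j, c j * x j ^ m := by
  have hV : IsUnit (vandermonde x) := by
    rw [isUnit_iff_isUnit_det, isUnit_iff_ne_zero]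
    exact det_vandermonde_ne_zero_iff.2 hx
  obtain ⟨c, hc⟩ := vecMul_surjective_iff_isUnit.2 hV fun l => u l
  have hx0 (j : Fin E.order) : x j ≠ 0 := fun h => h0 (h ▸ hroot j)
  have hsum : (fun m : ℤ => ∑ j, c j * x j ^ m) ∈ E.intSolSpace := by
    convert sum_mem (t := univ) fun j _ =>
      E.intSolSpace.smul_mem (c j) (zpow_mem_intSolSpace (hroot j) (hx0 j)) using 1
    funext m
    simp
  have hdiff := eq_zero_of_mem_intSolSpace h0 (sub_mem hu hsum) fun l => by
    simp [← congrFun hc l, vecMul, dotProduct]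
  exact ⟨c, fun m => sub_eq_zero.1 (congrFun hdiff m)⟩

end Field

end LinearRecurrence

open LinearRecurrence

/-- Hou–Mu: `𝔊_J(A)` as a ratio of determinants built from `n` recurrent sequences
sharing the characteristic polynomial `∏ (x − aᵢ)`. -/
theorem genSchur_of_recurrent_sequences {K : Type*} [Field K] {n : ℕ}
    (a : Fin n → K) (ha : Function.Injective a) (h0 : ∀ i, a i ≠ 0)
    (e : Fin n → K)
    (he : (X : K[X]) ^ n - ∑ s : Fin n, C (e s) * X ^ (s : ℕ) =
      ∏ i, (X - C (a i)))
    (T : Fin n → ℤ → K)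
    (hT : ∀ (i : Fin n) (m : ℤ), T i (m + n) = ∑ s : Fin n, e s * T i (m + s))
    (hdet : (Matrix.of fun k l : Fin n => T k (l : ℤ)).det ≠ 0)
    (J : Fin n → ℤ) :
    genSchur a J =
      (Matrix.of fun k l : Fin n => T k (J l + (l : ℤ))).det /
        (Matrix.of fun k l : Fin n => T k (l : ℤ)).det := by
  have hchar : (LinearRecurrence.mk n e).charPoly = ∏ i, (X - C (a i)) := by
    rw [← he, charPoly, X_pow_eq_monomial]
    simp only [C_mul_X_pow_eq_monomial]
  have hroot (i : Fin n) : (LinearRecurrence.mk n e).charPoly.IsRoot (a i) := by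
    rw [hchar, isRoot_prod]
    exact ⟨i, mem_univ i, by simp⟩
  have hnot0 : ¬(LinearRecurrence.mk n e).charPoly.IsRoot 0 := by
    rw [hchar, isRoot_prod]
    simp [h0]
  choose c hc using fun k => exists_eq_sum_zpow_of_mem_intSolSpace hnot0 ha hroot (hT k)
  have hfac (f : Fin n → ℤ) :
      (of fun k l => T k (f l)) = of c * of fun j l => a j ^ f l := by
    ext k l
    simp [mul_apply, hc]
  have hc0 : (of c).det ≠ 0 := by
    rw [hfac, det_mul] at hdet
    exact left_ne_zero_of_mul hdet
  rw [hfac, hfac, det_mul, det_mul, mul_div_mul_left _ _ hc0, genSchur, ← det_transpose,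
    ← det_transpose (of fun j l => a j ^ (l : ℤ))]
  rfl
end

section
/- For distinct nonzero elements a_1,…,a_n of a field and any fixed l with 1 ≤ l ≤ n, the sequence k ↦ 𝔊_{(0^{l−1}, k−l+1, 0^{n−l})}(A), k ∈ ℤ, satisfies the linear recurrence whose characteristic polynomial is g(x) = ∏_{i=1}^n (x − a_i): writing g(x) = x^n − ∑_{s=0}^{n−1} e_s x^s, one has 𝔊_{(0^{l−1}, k+n−l+1, 0^{n−l})}(A) = ∑_{s=0}^{n−1} e_s · 𝔊_{(0^{l−1}, k+s−l+1, 0^{n−l})}(A) for all k ∈ ℤ. -/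
open Polynomial Finset

private lemma det_updateRow_finset_sum {R : Type*} [CommRing R] {n : ℕ} {ι : Type*}
    (A : Matrix (Fin n) (Fin n) R) (j : Fin n) (v : ι → Fin n → R) (S : Finset ι) :
    (A.updateRow j (∑ i ∈ S, v i)).det = ∑ i ∈ S, (A.updateRow j (v i)).det := by
  classical
  induction S using Finset.cons_induction with
  | empty =>
      simp only [Finset.sum_empty]
      exact Matrix.det_eq_zero_of_row_eq_zero j (by simp)
  | cons i S hi ih =>
      rw [Finset.sum_cons, Matrix.det_updateRow_add, ih, Finset.sum_cons]

/-- For each fixed row `l`, the sequence `k ↦ 𝔊_{(0^{l−1}, k−l+1, 0^{n−l})}(A)`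
satisfies the linear recurrence with characteristic polynomial `∏ (x − aᵢ)`. -/
theorem genSchur_row_recurrence {K : Type*} [Field K] {n : ℕ}
    (a : Fin n → K) (ha : Function.Injective a) (h0 : ∀ i, a i ≠ 0)
    (e : Fin n → K)
    (he : (X : K[X]) ^ n - ∑ s : Fin n, C (e s) * X ^ (s : ℕ) =
      ∏ i, (X - C (a i))) :
    ∀ (l : Fin n) (k : ℤ),
      genSchur a (fun s => if s = l then k + n - (l : ℤ) else 0) =
        ∑ s : Fin n,
          e s * genSchur a (fun t => if t = l then k + (s : ℤ) - (l : ℤ) else 0) := by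
  intro l k
  classical
  set V : Matrix (Fin n) (Fin n) K := Matrix.of fun s t : Fin n => a t ^ ((s : ℕ) : ℤ)
    with hV
  -- evaluation of `he` at `a t`
  have hpow : ∀ t : Fin n, (a t) ^ n = ∑ s : Fin n, e s * (a t) ^ (s : ℕ) := by
    intro t
    have := congrArg (Polynomial.eval (a t)) he
    simp only [eval_sub, eval_pow, eval_X, eval_finset_sum, eval_mul, eval_C,
      eval_prod] at this
    rw [Finset.prod_eq_zero (Finset.mem_univ t) (by simp)] at this
    exact sub_eq_zero.mp this
  -- row identity
  have hrow : ∀ t : Fin n, a t ^ (k + (n : ℤ)) = ∑ s : Fin n, e s * a t ^ (k + (s : ℤ)) := by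
    intro t
    have h1 : a t ^ (k + (n : ℤ)) = a t ^ k * (a t) ^ n := by
      rw [zpow_add₀ (h0 t), zpow_natCast]
    have h2 : ∀ s : Fin n, a t ^ (k + (s : ℤ)) = a t ^ k * (a t) ^ (s : ℕ) := by
      intro s
      rw [show ((s : Fin n) : ℤ) = ((s : ℕ) : ℤ) from rfl, zpow_add₀ (h0 t), zpow_natCast]
    rw [h1, hpow t]
    rw [Finset.mul_sum]
    refine Finset.sum_congr rfl fun s _ => ?_
    rw [h2 s]; ring
  -- identify the matrices with row updates of V
  have hmat : ∀ m : ℤ,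
      (Matrix.of fun s t : Fin n =>
          a t ^ ((if s = l then m - (l : ℤ) else 0) + (s : ℤ))) =
        V.updateRow l (fun t => a t ^ m) := by
    intro m
    funext s t
    by_cases hs : s = l
    · subst hs
      simp only [Matrix.updateRow_self, Matrix.of_apply, if_pos rfl]
      congr 1
      simp only [if_true]
      ring
    · simp only [Matrix.updateRow_ne hs, Matrix.of_apply, if_neg hs, hV]
      congr 1
      ring
  have key : (V.updateRow l (fun t => a t ^ (k + (n : ℤ)))).det =
      ∑ s : Fin n, e s * (V.updateRow l (fun t => a t ^ (k + (s : ℤ)))).det := by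
    have : (fun t => a t ^ (k + (n : ℤ))) =
        ∑ s : Fin n, e s • (fun t => a t ^ (k + (s : ℤ))) := by
      funext t
      simpa using hrow t
    rw [this, det_updateRow_finset_sum]
    refine Finset.sum_congr rfl fun s _ => ?_
    rw [Matrix.det_updateRow_smul]
  -- conclude
  unfold genSchur
  have hL : (Matrix.of fun s t : Fin n =>
      a t ^ ((if s = l then k + (n : ℤ) - (l : ℤ) else 0) + (s : ℤ))) =
      V.updateRow l (fun t => a t ^ (k + (n : ℤ))) := hmat (k + (n : ℤ))
  have hR : ∀ s : Fin n, (Matrix.of fun s' t : Fin n =>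
      a t ^ ((if s' = l then k + (s : ℤ) - (l : ℤ) else 0) + (s' : ℤ))) =
      V.updateRow l (fun t => a t ^ (k + (s : ℤ))) := fun s => hmat (k + (s : ℤ))
  calc (Matrix.of fun s t : Fin n =>
        a t ^ ((if s = l then k + (n : ℤ) - (l : ℤ) else 0) + (s : ℤ))).det / V.det
      = (∑ s : Fin n, e s * (V.updateRow l (fun t => a t ^ (k + (s : ℤ)))).det) / V.det := by
        rw [hL, key]
    _ = ∑ s : Fin n, e s * ((V.updateRow l (fun t => a t ^ (k + (s : ℤ)))).det / V.det) := by
        rw [Finset.sum_div]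
        exact Finset.sum_congr rfl fun s _ => (mul_div_assoc _ _ _)
    _ = _ := by
        refine Finset.sum_congr rfl fun s _ => ?_
        rw [hR s]
end

section
/- Let a_1,…,a_n be distinct elements of a field, g(x) = ∏(x − a_i), and k ∈ ℕ. For 1 ≤ l ≤ n, the coefficient of x^{l−1} in the remainder of x^k modulo g equals (−1)^{n−l} s_{(1^{n−l}, k−n+1)}(a_1,…,a_n) when k ≥ n, where s_{(1^{n−l}, k−n+1)} is the Schur polynomial of the hook-type partition with n−l parts equal to 1 and one part k−n+1 ≥ 1, and also equals 𝔊_{(0^{l−1}, k−l+1, 0^{n−l})}(A). -/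
/-!
The remainder `r = X ^ k %ₘ g` has degree `< n` and agrees with `X ^ k` at the nodes `aₜ`, so its
coefficient vector solves the Vandermonde system `∑ₛ r.coeff s * aₜ ^ s = aₜ ^ k`; Cramer's rule
gives the `𝔊` form. Moving the row of exponent `k` from position `l` to the bottom is the cycle
`(l l+1 … n-1)`, of sign `(-1) ^ (n - 1 - l)`, and turns the `𝔊` form into the hook Schur form.
-/

open Polynomial Finset
open scoped Matrix

theorem Fin.val_cycleIcc_last {m : ℕ} (l s : Fin (m + 1)) :
    (Fin.cycleIcc l (Fin.last m) s : ℕ) =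
      if s < l then (s : ℕ) else if (s : ℕ) < m then (s : ℕ) + 1 else l := by
  rcases lt_or_ge s l with hsl | hls
  · rw [Fin.cycleIcc_of_lt hsl, if_pos hsl]
  rcases lt_or_eq_of_le (Fin.le_last s) with hsm | rfl
  · rw [Fin.cycleIcc_of_ge_of_lt hls hsm, Fin.val_add_one_of_lt hsm, if_neg (not_lt.2 hls),
      if_pos (by simpa [Fin.lt_def] using hsm)]
  · rw [Fin.cycleIcc_of_last hls, if_neg (not_lt.2 hls), if_neg (by simp)]

namespace Matrix

section

variable {n R : Type*} [Fintype n] [DecidableEq n]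

theorem cramer_mulVec_self [CommRing R] (A : Matrix n n R) (x : n → R) :
    A.cramer (A *ᵥ x) = A.det • x := by
  rw [cramer_eq_adjugate_mulVec, mulVec_mulVec, adjugate_mul, smul_mulVec, one_mulVec]

theorem eq_det_updateRow_div_det_of_transpose_mulVec_eq {K : Type*} [Field K] {A : Matrix n n K}
    (hA : A.det ≠ 0) {x b : n → K} (h : Aᵀ *ᵥ x = b) (i : n) :
    x i = (A.updateRow i b).det / A.det := by
  rw [eq_div_iff hA, ← cramer_transpose_apply, ← h, cramer_mulVec_self, det_transpose,
    Pi.smul_apply, smul_eq_mul, mul_comm]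

end

theorem vandermonde_mulVec_coeff {R : Type*} [CommRing R] {n : ℕ} (v : Fin n → R)
    {p : R[X]} (hp : p.natDegree < n) :
    vandermonde v *ᵥ (fun j => p.coeff j) = fun i => p.eval (v i) := by
  ext i
  rw [eval_eq_sum_range' hp, ← Fin.sum_univ_eq_sum_range]
  simp only [mulVec, dotProduct, vandermonde_apply, mul_comm]

theorem det_submatrix_cycleIcc_last {R : Type*} [CommRing R] {m : ℕ}
    (M : Matrix (Fin (m + 1)) (Fin (m + 1)) R) (l : Fin (m + 1)) :
    (M.submatrix (Fin.cycleIcc l (Fin.last m)) id).det = (-1) ^ (m - l : ℕ) * M.det := by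
  rw [det_permute, Fin.sign_cycleIcc_of_le (Fin.le_last l)]
  simp

end Matrix

theorem Lagrange.coeff_modByMonic_nodal {K : Type*} [Field K] {n : ℕ} {v : Fin n → K}
    (hv : Function.Injective v) (f : K[X]) (i : Fin n) :
    (f %ₘ Lagrange.nodal univ v).coeff i =
      ((Matrix.vandermonde v)ᵀ.updateRow i fun t => f.eval (v t)).det /
        (Matrix.vandermonde v)ᵀ.det := by
  have hdeg : (f %ₘ Lagrange.nodal univ v).natDegree < n := by
    have hn : Lagrange.nodal univ v ≠ 1 := by
      intro h
      have := congrArg natDegree h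
      rw [Lagrange.natDegree_nodal, card_univ, Fintype.card_fin, natDegree_one] at this
      exact i.pos.ne' this
    simpa using natDegree_modByMonic_lt f Lagrange.nodal_monic hn
  have hV : (Matrix.vandermonde v)ᵀ.det ≠ 0 := by
    rw [Matrix.det_transpose]; exact Matrix.det_vandermonde_ne_zero_iff.2 hv
  refine Matrix.eq_det_updateRow_div_det_of_transpose_mulVec_eq
    (x := fun j => (f %ₘ Lagrange.nodal univ v).coeff j) hV ?_ i
  rw [Matrix.transpose_transpose, Matrix.vandermonde_mulVec_coeff v hdeg]
  ext t
  exact eval₂_modByMonic_eq_self_of_root (Lagrange.eval_nodal_at_node (mem_univ t))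

theorem remainder_coeff_hook_schur_general {K : Type*} [Field K] {n : ℕ}
    (a : Fin n → K) (ha : Function.Injective a)
    (k : ℕ) (g : K[X]) (hg : g = ∏ i, (X - C (a i))) :
    ∀ l : Fin n,
      ((X ^ k) %ₘ g).coeff l =
          (-1 : K) ^ (n - 1 - (l : ℕ)) *
            ((Matrix.of fun s t : Fin n =>
                a t ^ (if (s : ℕ) < (l : ℕ) then (s : ℕ)
                  else if (s : ℕ) < n - 1 then (s : ℕ) + 1 else k)).det /
              (Matrix.of fun s t : Fin n => a t ^ (s : ℕ)).det) ∧
        ((X ^ k) %ₘ g).coeff l =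
          (Matrix.of fun s t : Fin n =>
              a t ^ (if s = l then k else (s : ℕ))).det /
            (Matrix.of fun s t : Fin n => a t ^ (s : ℕ)).det := by
  intro l
  obtain ⟨m, rfl⟩ : ∃ m, n = m + 1 := ⟨n - 1, by have := l.pos; omega⟩
  set M := Matrix.of fun s t : Fin (m + 1) => a t ^ (if s = l then k else (s : ℕ))
  have hM : M = (Matrix.vandermonde a)ᵀ.updateRow l fun t => (X ^ k).eval (a t) := by
    ext s t
    by_cases hs : s = l <;> simp [M, hs, Matrix.updateRow_apply]
  have hcramer : ((X ^ k) %ₘ g).coeff l = M.det / (Matrix.vandermonde a)ᵀ.det := by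
    rw [hg, ← Lagrange.nodal_eq, Lagrange.coeff_modByMonic_nodal ha, hM]
  have hhook : (Matrix.of fun s t : Fin (m + 1) =>
      a t ^ (if (s : ℕ) < (l : ℕ) then (s : ℕ) else if (s : ℕ) < m + 1 - 1 then (s : ℕ) + 1 else k)) =
      M.submatrix (Fin.cycleIcc l (Fin.last m)) id := by
    ext s t
    simp only [Matrix.of_apply, Matrix.submatrix_apply, id, M, Fin.ext_iff, Fin.val_cycleIcc_last,
      Fin.lt_def, Nat.add_sub_cancel]
    split_ifs <;> first | rfl | (exfalso; omega)
  refine ⟨?_, hcramer⟩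
  rw [hcramer, hhook, Matrix.det_submatrix_cycleIcc_last, Nat.add_sub_cancel, mul_div_assoc,
    ← mul_assoc, ← pow_add, Even.neg_one_pow ⟨_, rfl⟩, one_mul]
  rfl

/-- The coefficient of `x^{l−1}` in the remainder of `x^k` modulo `∏ (x − aᵢ)` equals
`(−1)^{n−l} s_{(1^{n−l}, k−n+1)}(A)` (a hook Schur polynomial) and also equals
`𝔊_{(0^{l−1}, k−l+1, 0^{n−l})}(A)`. -/
theorem remainder_coeff_hook_schur {K : Type*} [Field K] {n : ℕ}
    (a : Fin n → K) (ha : Function.Injective a)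
    (k : ℕ) (hk : n ≤ k) (g : K[X]) (hg : g = ∏ i, (X - C (a i))) :
    ∀ l : Fin n,
      ((X ^ k) %ₘ g).coeff l =
          (-1 : K) ^ (n - 1 - (l : ℕ)) *
            ((Matrix.of fun s t : Fin n =>
                a t ^ (if (s : ℕ) < (l : ℕ) then (s : ℕ)
                  else if (s : ℕ) < n - 1 then (s : ℕ) + 1 else k)).det /
              (Matrix.of fun s t : Fin n => a t ^ (s : ℕ)).det) ∧
        ((X ^ k) %ₘ g).coeff l =
          (Matrix.of fun s t : Fin n =>
              a t ^ (if s = l then k else (s : ℕ))).det /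
            (Matrix.of fun s t : Fin n => a t ^ (s : ℕ)).det :=
  remainder_coeff_hook_schur_general a ha k g hg
end
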